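/- arXiv:1611.08019 — 9 statements merged into one kernel-verified Lean document; each statement's English description precedes it below -/
import Mathlib

section
/- For all integers n ≥ 4, the sequence satisfies T_n = (a-1)T_{n-1} + (a+b-1)T_{n-2} + (a+b)T_{n-3} + (a+b)T_{n-4} + ... + (a+b)T_1 + (a+b+1)T_0. -/
/-- Subtracting consecutive instances of the identity leaves exactly the recurrence, so the
defect `T 2 - (a - 1) T 1 - (a + b) T 0` of the identity is the same for every `m`. -/
theorem apply_add_four_eq_of_recurrence {R : Type*} [CommRing R] {a b : R} {T : ℕ → R}
    (hrec : ∀ n, T (n + 3) = a * T (n + 2) + b * T (n + 1) + T n) (m : ℕ) :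
    T (m + 4) = (a - 1) * T (m + 3) + (a + b - 1) * T (m + 2) +
      (a + b) * ∑ i ∈ Finset.Icc 1 (m + 1), T i + (a + b + 1) * T 0 +
      (T 2 - (a - 1) * T 1 - (a + b) * T 0) := by
  induction m with
  | zero =>
    rw [Finset.Icc_self, Finset.sum_singleton]
    linear_combination hrec 1 + hrec 0
  | succ m ih =>
    rw [Finset.sum_Icc_succ_top (by omega)]
    linear_combination hrec (m + 2) + ih

theorem stmt_0_general (a b : ℤ)
    (T : ℕ → ℤ) (hT0 : T 0 = 1) (hT1 : T 1 = a) (hT2 : T 2 = a ^ 2 + b)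
    (hrec : ∀ n : ℕ, T (n + 3) = a * T (n + 2) + b * T (n + 1) + T n) :
    ∀ n : ℕ, 4 ≤ n →
      T n = (a - 1) * T (n - 1) + (a + b - 1) * T (n - 2) +
        (∑ i ∈ Finset.Icc 1 (n - 3), (a + b) * T i) + (a + b + 1) * T 0 := by
  intro n hn
  obtain ⟨m, rfl⟩ := Nat.exists_eq_add_of_le' hn
  rw [show m + 4 - 1 = m + 3 by omega, show m + 4 - 2 = m + 2 by omega,
    show m + 4 - 3 = m + 1 by omega, ← Finset.mul_sum, apply_add_four_eq_of_recurrence hrec m,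
    hT0, hT1, hT2]
  ring

/-- For all n ≥ 4, T n = (a-1)T_{n-1} + (a+b-1)T_{n-2} + (a+b)(T_{n-3}+⋯+T_1) + (a+b+1)T_0. -/
theorem stmt_0 (a b : ℤ) (hb1 : -a + 1 ≤ b) (hb2 : b ≤ -2)
    (T : ℕ → ℤ) (hT0 : T 0 = 1) (hT1 : T 1 = a) (hT2 : T 2 = a ^ 2 + b)
    (hrec : ∀ n : ℕ, T (n + 3) = a * T (n + 2) + b * T (n + 1) + T n) :
    ∀ n : ℕ, 4 ≤ n →
      T n = (a - 1) * T (n - 1) + (a + b - 1) * T (n - 2) +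
        (∑ i ∈ Finset.Icc 1 (n - 3), (a + b) * T i) + (a + b + 1) * T 0 :=
  stmt_0_general a b T hT0 hT1 hT2 hrec
end

section
/- Every nonnegative integer n can be expressed as n = Σ_{i=0}^{N} ℓ_i T_i with digits ℓ_i ∈ {0, ..., a-1} satisfying the lexicographic condition ℓ_j ℓ_{j-1} ⋯ ℓ_{j-k} ≤_lex (a-1)(a+b-1)(a+b)⋯(a+b) for all j ≥ k ≥ 0. -/
/-!
Greedy digits satisfy `∑_{i ≤ j} ℓ_i T_i < T_{j+1}` for every `j`, and `T_{j+1} ≤ a T_j` keeps each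
digit below `a`. If `ℓ_j ⋯ ℓ_{j-t+1} = p_0 ⋯ p_{t-1}`, then
`ℓ_{j-t} T_{j-t} < T_{j+1} - ∑_{s<t} p_s T_{j-s} ≤ (p_t + 1) T_{j-t}`, which forces `ℓ_{j-t} ≤ p_t`.
The last inequality is `T_{j+1} ≤ a T_j` for `t = 0` and `T_{j+2} ≤ (a-1) T_{j+1} + (a+b) T_j`
for `t = 1`; for `t ≥ 2` the recurrence makes it invariant under `(t, j) ↦ (t+1, j+1)`, because
`p` is constant from index 2 on, so it reduces to the case `t = 1` again. Both base inequalities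
follow from `T_{j+2} + T_j ≤ a T_{j+1}`, which is where `b ≤ -2` enters.
-/

open Finset

def parryWord (a b : ℤ) : ℕ → ℤ :=
  fun t => if t = 0 then a - 1 else if t = 1 then a + b - 1 else a + b

@[simp] lemma parryWord_zero (a b : ℤ) : parryWord a b 0 = a - 1 := rfl

@[simp] lemma parryWord_one (a b : ℤ) : parryWord a b 1 = a + b - 1 := rfl

@[simp] lemma parryWord_add_two (a b : ℤ) (t : ℕ) : parryWord a b (t + 2) = a + b := rfl

theorem lex_le_of_forall_prefix {α : Type*} [LinearOrder α] {w p : ℕ → α} {k : ℕ}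
    (h : ∀ t ≤ k, (∀ s < t, w s = p s) → w t ≤ p t) :
    (∀ t ≤ k, w t = p t) ∨ ∃ t ≤ k, (∀ s < t, w s = p s) ∧ w t < p t := by
  induction k with
  | zero =>
    rcases (h 0 le_rfl fun s hs => absurd hs s.not_lt_zero).eq_or_lt with heq | hlt
    · exact .inl fun t ht => by rwa [Nat.le_zero.1 ht]
    · exact .inr ⟨0, le_rfl, fun s hs => absurd hs s.not_lt_zero, hlt⟩
  | succ k ih =>
    rcases ih fun t ht => h t (ht.trans k.le_succ) with heq | ⟨t, htk, hpre, hlt⟩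
    · have hpre : ∀ s < k + 1, w s = p s := fun s hs => heq s (Nat.lt_succ_iff.1 hs)
      rcases (h (k + 1) le_rfl hpre).eq_or_lt with hlast | hlt
      · refine .inl fun t ht => ?_
        rcases ht.lt_or_eq with ht | rfl
        exacts [hpre t ht, hlast]
      · exact .inr ⟨k + 1, le_rfl, hpre, hlt⟩
    · exact .inr ⟨t, htk.trans k.le_succ, hpre, hlt⟩

theorem exists_greedy_digits {a : ℤ} {T : ℕ → ℤ} (hT0 : T 0 = 1) (hpos : ∀ n, 0 < T n)
    (hmono : Monotone T) (hstep : ∀ n, T (n + 1) ≤ a * T n) (m : ℕ) {n : ℤ} (hn : 0 ≤ n)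
    (hnm : n < T m) :
    ∃ ℓ : ℕ → ℤ, (∀ i, 0 ≤ ℓ i ∧ ℓ i ≤ a - 1) ∧ (∀ i ≥ m, ℓ i = 0) ∧
      n = ∑ i ∈ range m, ℓ i * T i ∧ ∀ j, ∑ i ∈ range j, ℓ i * T i < T j := by
  induction m generalizing n with
  | zero =>
    have ha : 1 ≤ a := by linarith [hT0 ▸ hstep 0, hpos 1]
    obtain rfl : n = 0 := by rw [hT0] at hnm; omega
    exact ⟨0, fun _ => ⟨le_rfl, by simpa using ha⟩, fun _ _ => rfl, by simp,
      fun j => by simpa using hpos j⟩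
  | succ m ih =>
    have hTm := hpos m
    obtain ⟨ℓ, hdig, hsupp, hsum, hpartial⟩ :=
      ih (Int.emod_nonneg n hTm.ne') (Int.emod_lt_of_pos n hTm)
    have hdiv : n = n / T m * T m + n % T m := by linarith [Int.mul_ediv_add_emod n (T m)]
    have hd : n / T m < a := Int.ediv_lt_of_lt_mul hTm (hnm.trans_le (hstep m))
    have hlow : ∀ j ≤ m, ∑ i ∈ range j, Function.update ℓ m (n / T m) i * T i
        = ∑ i ∈ range j, ℓ i * T i := fun j hj =>
      sum_congr rfl fun i hi => by rw [Function.update_of_ne (by simp at hi; omega)]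
    have htotal : ∑ i ∈ range (m + 1), Function.update ℓ m (n / T m) i * T i = n := by
      rw [sum_range_succ, hlow m le_rfl, Function.update_self, ← hsum]
      linarith
    refine ⟨Function.update ℓ m (n / T m), fun i => ?_, fun i hi => ?_, htotal.symm, fun j => ?_⟩
    · rcases eq_or_ne i m with rfl | hi
      · rw [Function.update_self]
        exact ⟨Int.ediv_nonneg hn hTm.le, by omega⟩
      · simpa [hi] using hdig i
    · rw [Function.update_of_ne (by omega)]
      exact hsupp i (by omega)
    · rcases le_or_gt j m with hj | hj
      · rw [hlow j hj]
        exact hpartial j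
      · rw [eventually_constant_sum (fun i hi => by
          rw [Function.update_of_ne (by omega), hsupp i (by omega), zero_mul]) hj, htotal]
        exact hnm.trans_le (hmono hj)

theorem digit_le_of_prefix_eq {ℓ T p : ℕ → ℤ} (hℓ : ∀ i, 0 ≤ ℓ i) (hT : ∀ i, 0 < T i)
    {j t : ℕ} (htj : t ≤ j) (hsum : ∑ i ∈ range (j + 1), ℓ i * T i < T (j + 1))
    (hbound : T (j + 1) ≤ ∑ s ∈ range t, p s * T (j - s) + (p t + 1) * T (j - t))
    (hprefix : ∀ s < t, ℓ (j - s) = p s) : ℓ (j - t) ≤ p t := by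
  have hle : ∑ s ∈ range t, p s * T (j - s) + ℓ (j - t) * T (j - t)
      ≤ ∑ i ∈ range (j + 1), ℓ i * T i := calc
    _ = ∑ s ∈ range (t + 1), ℓ (j - s) * T (j - s) := by
      rw [sum_range_succ]
      congr 1
      exact sum_congr rfl fun s hs => by rw [hprefix s (mem_range.1 hs)]
    _ ≤ ∑ s ∈ range (j + 1), ℓ (j - s) * T (j - s) :=
      sum_le_sum_of_subset_of_nonneg (range_subset_range.2 (by omega))
        fun i _ _ => mul_nonneg (hℓ _) (hT _).le
    _ = ∑ i ∈ range (j + 1), ℓ i * T i := sum_range_reflect (fun i => ℓ i * T i) (j + 1)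
  have : ℓ (j - t) * T (j - t) < (p t + 1) * T (j - t) := by linarith
  exact Int.lt_add_one_iff.1 (lt_of_mul_lt_mul_right this (hT _).le)

theorem natCast_lt_of_strictMono {T : ℕ → ℤ} (h0 : 0 < T 0) (hT : StrictMono T) (k : ℕ) :
    (k : ℤ) < T k := by
  induction k with
  | zero => simpa
  | succ k ih =>
    have := hT (lt_add_one k)
    push_cast
    omega

section Recurrence

variable {a b : ℤ} {T : ℕ → ℤ}

theorem pos_and_lt_succ_of_rec (hb1 : -a + 1 ≤ b) (hb2 : b ≤ -2) (hT0 : T 0 = 1)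
    (hT1 : T 1 = a) (hT2 : T 2 = a ^ 2 + b)
    (hrec : ∀ n : ℕ, T (n + 3) = a * T (n + 2) + b * T (n + 1) + T n) (n : ℕ) :
    0 < T n ∧ T n < T (n + 1) := by
  suffices ∀ n, 0 < T n ∧ T n < T (n + 1) ∧ T (n + 1) < T (n + 2) from ⟨(this n).1, (this n).2.1⟩
  intro n
  induction n with
  | zero =>
    rw [hT0, hT1, hT2]
    exact ⟨one_pos, by linarith, by nlinarith⟩
  | succ n ih =>
    obtain ⟨h0, h1, h2⟩ := ih
    refine ⟨by linarith, h2, ?_⟩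
    -- T (n+3) - T (n+2) = (a-1) (T (n+2) - T (n+1)) + (a+b-1) T (n+1) + T n
    nlinarith [hrec n, mul_pos (by linarith : (0 : ℤ) < a - 1) (sub_pos.2 h2),
      mul_nonneg (by linarith : (0 : ℤ) ≤ a + b - 1) (h0.trans h1).le]

theorem add_two_add_le_of_rec (hb2 : b ≤ -2) (hT0 : T 0 = 1) (hT1 : T 1 = a)
    (hT2 : T 2 = a ^ 2 + b) (hrec : ∀ n : ℕ, T (n + 3) = a * T (n + 2) + b * T (n + 1) + T n)
    (hpos : ∀ n, 0 < T n) (hlt : ∀ n, T n < T (n + 1)) (j : ℕ) :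
    T (j + 2) + T j ≤ a * T (j + 1) := by
  cases j with
  | zero =>
    rw [hT0, hT1, hT2]
    nlinarith
  | succ j =>
    nlinarith [hrec j, hlt j, mul_le_mul_of_nonneg_right hb2 (hpos (j + 1)).le]

theorem succ_le_mul_of_rec (hT0 : T 0 = 1) (hT1 : T 1 = a) (hpos : ∀ n, 0 < T n)
    (hadd : ∀ j, T (j + 2) + T j ≤ a * T (j + 1)) (j : ℕ) : T (j + 1) ≤ a * T j := by
  cases j with
  | zero => rw [hT0, hT1, mul_one]
  | succ j => linarith [hadd j, hpos j]

theorem add_two_le_of_rec (hT0 : T 0 = 1) (hT1 : T 1 = a) (hT2 : T 2 = a ^ 2 + b)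
    (hrec : ∀ n : ℕ, T (n + 3) = a * T (n + 2) + b * T (n + 1) + T n)
    (hadd : ∀ j, T (j + 2) + T j ≤ a * T (j + 1)) (j : ℕ) :
    T (j + 2) ≤ (a - 1) * T (j + 1) + (a + b) * T j := by
  cases j with
  | zero =>
    rw [hT0, hT1, hT2]
    exact le_of_eq (by ring)
  | succ j => linarith [hrec j, hadd j]

-- The case `t + 2` of `succ_le_sum_parryWord_mul` once `sum_range_add_two_parryWord_mul` is applied.
theorem add_three_le_of_rec (hrec : ∀ n : ℕ, T (n + 3) = a * T (n + 2) + b * T (n + 1) + T n)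
    (hC : ∀ j, T (j + 2) ≤ (a - 1) * T (j + 1) + (a + b) * T j) :
    ∀ t j, t ≤ j → T (j + 3) ≤ (a - 1) * T (j + 2) + (a + b - 1) * T (j + 1)
      + (a + b) * ∑ s ∈ range t, T (j - s) + (a + b + 1) * T (j - t)
  | 0, j, _ => by
    simp only [sum_range_zero, Nat.sub_zero]
    linarith [hrec j, hC j]
  | t + 1, j + 1, h => by
    have := add_three_le_of_rec hrec hC t j (by omega)
    simp only [sum_range_succ', Nat.add_sub_add_right, Nat.sub_zero]
    linarith [hrec (j + 1)]
  | _ + 1, 0, h => by omega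

theorem sum_range_add_two_parryWord_mul (t j : ℕ) :
    ∑ s ∈ range (t + 2), parryWord a b s * T (j + 2 - s)
      = (a - 1) * T (j + 2) + (a + b - 1) * T (j + 1) + (a + b) * ∑ s ∈ range t, T (j - s) := by
  rw [sum_range_succ', sum_range_succ', mul_sum]
  simp [Nat.add_sub_add_right]
  ring

theorem succ_le_sum_parryWord_mul
    (hrec : ∀ n : ℕ, T (n + 3) = a * T (n + 2) + b * T (n + 1) + T n)
    (hstep : ∀ j, T (j + 1) ≤ a * T j)
    (hC : ∀ j, T (j + 2) ≤ (a - 1) * T (j + 1) + (a + b) * T j) :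
    ∀ t j, t ≤ j → T (j + 1)
      ≤ ∑ s ∈ range t, parryWord a b s * T (j - s) + (parryWord a b t + 1) * T (j - t)
  | 0, j, _ => by simpa using hstep j
  | 1, j + 1, _ => by simpa using hC j
  | t + 2, j + 2, h => by
    rw [sum_range_add_two_parryWord_mul, parryWord_add_two, Nat.add_sub_add_right]
    linarith [add_three_le_of_rec hrec hC t j (by omega)]
  | 1, 0, h | _ + 2, 0, h | _ + 2, 1, h => by omega

end Recurrence

/-- Every nonnegative integer has a greedy representation in base (T n) with
admissible (lexicographically bounded) digits. The pattern is
(a-1)(a+b-1)(a+b)(a+b)⋯ . -/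
theorem stmt_2 (a b : ℤ) (hb1 : -a + 1 ≤ b) (hb2 : b ≤ -2)
    (T : ℕ → ℤ) (hT0 : T 0 = 1) (hT1 : T 1 = a) (hT2 : T 2 = a ^ 2 + b)
    (hrec : ∀ n : ℕ, T (n + 3) = a * T (n + 2) + b * T (n + 1) + T n) :
    ∀ n : ℤ, 0 ≤ n → ∃ (N : ℕ) (ℓ : ℕ → ℤ),
      (∀ i, 0 ≤ ℓ i ∧ ℓ i ≤ a - 1) ∧
      n = ∑ i ∈ Finset.range (N + 1), ℓ i * T i ∧
      (∀ j k : ℕ, k ≤ j →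
        -- the word ℓ_j ℓ_{j-1} ⋯ ℓ_{j-k} is lexicographically at most the word
        -- p_0 p_1 ⋯ p_k where p_0 = a-1, p_1 = a+b-1, p_t = a+b for t ≥ 2
        (let p : ℕ → ℤ := fun t => if t = 0 then a - 1 else if t = 1 then a + b - 1 else a + b
         (∀ t : ℕ, t ≤ k → ℓ (j - t) = p t) ∨
         (∃ t : ℕ, t ≤ k ∧ (∀ s : ℕ, s < t → ℓ (j - s) = p s) ∧ ℓ (j - t) < p t))) := by
  have hpos_lt := pos_and_lt_succ_of_rec hb1 hb2 hT0 hT1 hT2 hrec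
  have hpos n := (hpos_lt n).1
  have hmono : StrictMono T := strictMono_nat_of_lt_succ fun n => (hpos_lt n).2
  have hadd := add_two_add_le_of_rec hb2 hT0 hT1 hT2 hrec hpos fun n => (hpos_lt n).2
  have hstep := succ_le_mul_of_rec hT0 hT1 hpos hadd
  have hC := add_two_le_of_rec hT0 hT1 hT2 hrec hadd
  intro n hn
  have hnT : n < T (n.toNat + 1) := by
    have := natCast_lt_of_strictMono (hpos 0) hmono (n.toNat + 1)
    omega
  obtain ⟨ℓ, hdig, -, hsum, hpartial⟩ :=
    exists_greedy_digits hT0 hpos hmono.monotone hstep _ hn hnT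
  refine ⟨n.toNat, ℓ, hdig, hsum, fun j k hkj => lex_le_of_forall_prefix fun t htk hprefix => ?_⟩
  have htj := htk.trans hkj
  exact digit_le_of_prefix_eq (fun i => (hdig i).1) hpos htj (hpartial (j + 1))
    (succ_le_sum_parryWord_mul hrec hstep hC t j htj) hprefix
end

section
/- The polynomial P_{a,b}(x) = x^3 - a x^2 - b x - 1 has a real root β > 1, and all other (complex) roots of P_{a,b} have modulus strictly less than 1; i.e., β is a Pisot number. -/
/-!
Since `P(1) = -a - b < 0`, the intermediate value theorem gives a root `β > 1`. Dividing by
`x - β` leaves the real quadratic `x² + p x + q` with `p = β - a` and `q = β² - a β - b = 1 / β`,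
so `0 < q < 1`, and the values `P(1) = (1 - β)(1 + p + q)`, `P(-1) = (-1 - β)(1 - p + q)` give
`|p| < 1 + q`. These are the Schur–Cohn conditions for a monic real quadratic: its non-real roots
have modulus `√q < 1`, and its real roots lie in `(-1, 1)` because the quadratic is positive at `±1`
and beyond.
-/

open ComplexConjugate

theorem cubic_eq_mul_quadratic {R : Type*} [CommRing R] {a b β : R}
    (hβ : β ^ 3 - a * β ^ 2 - b * β - 1 = 0) (z : R) :
    z ^ 3 - a * z ^ 2 - b * z - 1 = (z - β) * (z ^ 2 + (β - a) * z + (β ^ 2 - a * β - b)) := by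
  linear_combination hβ

theorem exists_one_lt_cubic_root {a b : ℝ} (hab : 0 < a + b) :
    ∃ β : ℝ, 1 < β ∧ β ^ 3 - a * β ^ 2 - b * β - 1 = 0 := by
  set T := 1 + |a| + |b|
  have hT : 1 ≤ T := by simp only [T]; linarith [abs_nonneg a, abs_nonneg b]
  have hf1 : (1 : ℝ) ^ 3 - a * 1 ^ 2 - b * 1 - 1 < 0 := by linarith
  have hfT : 0 ≤ T ^ 3 - a * T ^ 2 - b * T - 1 := by
    nlinarith [le_abs_self a, le_abs_self b, abs_nonneg a, abs_nonneg b]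
  obtain ⟨β, ⟨hβ1, -⟩, hβ⟩ := intermediate_value_Icc hT
    (f := fun x : ℝ => x ^ 3 - a * x ^ 2 - b * x - 1) (by fun_prop) ⟨hf1.le, hfT⟩
  refine ⟨β, hβ1.lt_of_ne ?_, hβ⟩
  rintro rfl
  exact hf1.ne hβ

theorem lt_one_of_quadratic_eq_zero {p q x : ℝ} (hq : q < 1) (hpq : 0 < 1 + p + q)
    (hx : x ^ 2 + p * x + q = 0) : x < 1 := by
  by_contra! h
  nlinarith [mul_nonneg (sub_nonneg.2 h) (by linarith : (0 : ℝ) ≤ x - q)]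

theorem abs_lt_one_of_quadratic_eq_zero {p q x : ℝ} (hq : q < 1) (hpq : |p| < 1 + q)
    (hx : x ^ 2 + p * x + q = 0) : |x| < 1 := by
  rw [abs_lt] at hpq ⊢
  have hlt := lt_one_of_quadratic_eq_zero hq (by linarith) hx
  have hgt := lt_one_of_quadratic_eq_zero (p := -p) (x := -x) hq (by linarith)
    (by linear_combination hx)
  constructor <;> linarith

theorem Complex.norm_sq_eq_of_quadratic_eq_zero {p q : ℝ} {z : ℂ}
    (hz : z ^ 2 + p * z + q = 0) (him : z.im ≠ 0) : ‖z‖ ^ 2 = q := by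
  have hconj : conj z ^ 2 + p * conj z + q = 0 := by
    simpa using congrArg conj hz
  have hne : z - conj z ≠ 0 := by
    simp [Complex.sub_conj, him]
  have hsum : z + conj z + p = 0 :=
    (mul_eq_zero.1 (by linear_combination hz - hconj :
      (z - conj z) * (z + conj z + p) = 0)).resolve_left hne
  have hprod : z * conj z = q := by linear_combination z * hsum - hz
  rw [Complex.mul_conj] at hprod
  rw [Complex.sq_norm]
  exact_mod_cast hprod

theorem Complex.norm_lt_one_of_quadratic_eq_zero {p q : ℝ} {z : ℂ} (hq : q < 1)
    (hpq : |p| < 1 + q) (hz : z ^ 2 + p * z + q = 0) : ‖z‖ < 1 := by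
  by_cases him : z.im = 0
  · have hzre : (z.re : ℂ) = z := Complex.ext rfl (by simp [him])
    rw [← hzre] at hz ⊢
    rw [Complex.norm_real, Real.norm_eq_abs]
    exact abs_lt_one_of_quadratic_eq_zero hq hpq (by exact_mod_cast hz)
  · have hnorm := norm_sq_eq_of_quadratic_eq_zero hz him
    nlinarith [norm_nonneg z]

theorem quadratic_factor_schurCohn_conditions {a b β : ℝ} (hab : 0 < a + b) (hba : b < a + 2)
    (hβ1 : 1 < β) (hβ : β ^ 3 - a * β ^ 2 - b * β - 1 = 0) :
    β ^ 2 - a * β - b < 1 ∧ |β - a| < 1 + (β ^ 2 - a * β - b) := by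
  have h1 := cubic_eq_mul_quadratic hβ 1
  have hm1 := cubic_eq_mul_quadratic hβ (-1)
  refine ⟨by nlinarith, abs_lt.2 ⟨by nlinarith, by nlinarith⟩⟩

theorem norm_lt_one_of_cubic_eq_zero {a b β : ℝ} (hab : 0 < a + b) (hba : b < a + 2)
    (hβ1 : 1 < β) (hβ : β ^ 3 - a * β ^ 2 - b * β - 1 = 0) {z : ℂ}
    (hz : z ^ 3 - a * z ^ 2 - b * z - 1 = 0) (hzβ : z ≠ β) : ‖z‖ < 1 := by
  obtain ⟨hq, hpq⟩ := quadratic_factor_schurCohn_conditions hab hba hβ1 hβ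
  have hβ' : (β : ℂ) ^ 3 - a * β ^ 2 - b * β - 1 = 0 := by exact_mod_cast hβ
  rw [cubic_eq_mul_quadratic hβ' z] at hz
  refine Complex.norm_lt_one_of_quadratic_eq_zero hq hpq ?_
  push_cast
  exact (mul_eq_zero.1 hz).resolve_left (sub_ne_zero.2 hzβ)

/-- The polynomial x³ - a x² - b x - 1 has a real root β > 1 and all its other
complex roots have modulus < 1 (β is a Pisot number). -/
theorem stmt_3 (a b : ℤ) (hb1 : -a + 1 ≤ b) (hb2 : b ≤ -2) :
    ∃ β : ℝ, 1 < β ∧ β ^ 3 - a * β ^ 2 - b * β - 1 = 0 ∧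
      ∀ z : ℂ, z ^ 3 - a * z ^ 2 - b * z - 1 = 0 → z ≠ (β : ℂ) → ‖z‖ < 1 := by
  have hab : (0 : ℝ) < a + b := by exact_mod_cast (by omega : 0 < a + b)
  have hba : (b : ℝ) < a + 2 := by exact_mod_cast (by omega : b < a + 2)
  obtain ⟨β, hβ1, hβ⟩ := exists_one_lt_cubic_root hab
  refine ⟨β, hβ1, hβ, fun z hz hzβ => norm_lt_one_of_cubic_eq_zero hab hba hβ1 hβ ?_ hzβ⟩
  exact_mod_cast hz
end

section
/- The polynomial x^3 - 3x^2 + 2x - 1 has exactly one real root β, with β > 1, and its two complex conjugate roots α, ᾱ satisfy |α| < 1. -/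
/-!
By the intermediate value theorem the cubic has a real root `β ∈ [2, 3]`. Dividing out `z - β`
leaves the real quadratic `z² - (3 - β) z + c` with `c = β² - 3β + 2`, and comparing constant
terms gives `β c = 1`. Its discriminant is negative on `[2, 3]`, so its roots are a non-real
conjugate pair `α, ᾱ` with `|α|² = c = 1 / β < 1`. In particular `β` is the only real root.
-/

open Complex ComplexConjugate

lemma sub_mul_sub_conj (α z : ℂ) :
    (z - α) * (z - conj α) = z ^ 2 - 2 * α.re * z + normSq α := by
  have hsum := add_conj α
  have hprod := mul_conj α
  push_cast at hsum
  linear_combination (-z) * hsum + hprod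

lemma exists_re_eq_normSq_eq_of_sq_lt {r q : ℝ} (h : r ^ 2 < q) :
    ∃ α : ℂ, α.re = r ∧ α.im ≠ 0 ∧ normSq α = q := by
  have hpos : 0 < q - r ^ 2 := sub_pos.mpr h
  refine ⟨⟨r, √(q - r ^ 2)⟩, rfl, (Real.sqrt_pos.mpr hpos).ne', ?_⟩
  rw [normSq_mk, ← sq, ← sq, Real.sq_sqrt hpos.le]
  ring

lemma cubic_eq_sub_mul_quadratic {R : Type*} [CommRing R] {β : R}
    (hβ : β ^ 3 - 3 * β ^ 2 + 2 * β - 1 = 0) (z : R) :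
    z ^ 3 - 3 * z ^ 2 + 2 * z - 1 = (z - β) * (z ^ 2 - (3 - β) * z + (β ^ 2 - 3 * β + 2)) := by
  linear_combination hβ

lemma exists_cubic_root_mem_Icc :
    ∃ β ∈ Set.Icc (2 : ℝ) 3, β ^ 3 - 3 * β ^ 2 + 2 * β - 1 = 0 := by
  have hcont : ContinuousOn (fun x : ℝ => x ^ 3 - 3 * x ^ 2 + 2 * x - 1) (Set.Icc 2 3) := by
    fun_prop
  exact intermediate_value_Icc (by norm_num) hcont (by norm_num)

/-- x³ - 3x² + 2x - 1 has exactly one real root β, with β > 1, and its two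
complex conjugate roots α, conj α satisfy |α| < 1. -/
theorem stmt_4 :
    ∃ β : ℝ, 1 < β ∧ β ^ 3 - 3 * β ^ 2 + 2 * β - 1 = 0 ∧
      (∀ x : ℝ, x ^ 3 - 3 * x ^ 2 + 2 * x - 1 = 0 → x = β) ∧
      ∃ α : ℂ, α.im ≠ 0 ∧ α ^ 3 - 3 * α ^ 2 + 2 * α - 1 = 0 ∧
        (starRingEnd ℂ α) ^ 3 - 3 * (starRingEnd ℂ α) ^ 2 + 2 * (starRingEnd ℂ α) - 1 = 0 ∧
        ‖α‖ < 1 ∧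
        ∀ z : ℂ, z ^ 3 - 3 * z ^ 2 + 2 * z - 1 = 0 →
          z = (β : ℂ) ∨ z = α ∨ z = starRingEnd ℂ α := by
  obtain ⟨β, ⟨hβ2, hβ3⟩, hβ⟩ := exists_cubic_root_mem_Icc
  have hdisc : ((3 - β) / 2) ^ 2 < β ^ 2 - 3 * β + 2 := by nlinarith
  obtain ⟨α, hre, him, hnormSq⟩ := exists_re_eq_normSq_eq_of_sq_lt hdisc
  have hfactor (z : ℂ) :
      z ^ 3 - 3 * z ^ 2 + 2 * z - 1 = (z - β) * ((z - α) * (z - conj α)) := by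
    rw [cubic_eq_sub_mul_quadratic (β := (β : ℂ)) (by exact_mod_cast hβ) z, sub_mul_sub_conj,
      hre, hnormSq]
    push_cast
    ring
  have hroots (z : ℂ) (hz : z ^ 3 - 3 * z ^ 2 + 2 * z - 1 = 0) : z = β ∨ z = α ∨ z = conj α := by
    simpa only [hfactor, mul_eq_zero, sub_eq_zero] using hz
  refine ⟨β, by linarith, hβ, fun x hx => ?_, α, him, by simp [hfactor], by simp [hfactor],
    ?_, hroots⟩
  · rcases hroots x (by exact_mod_cast hx) with h | h | h
    · exact_mod_cast h
    · exact (him (by simpa using congrArg im h.symm)).elim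
    · exact (him (by simpa using congrArg im h.symm)).elim
  · have hnormSq_lt : normSq α < 1 := by nlinarith
    exact (sq_lt_one_iff₀ (norm_nonneg α)).mp (by rwa [Complex.sq_norm])
end

section
/- If α ∈ ℂ satisfies α^3 = a α^2 + b α + 1 and |α| < 1, then α + b α^2 + (a-1) α^3 = (b+2)α^4 + (a+b+1)α^5 + (a+b)·Σ_{i=6}^{∞} α^i, i.e., α + b α^2 + (a-1) α^3 = (b+2)α^4 + (a+b+1)α^5 + (a+b)α^6/(1-α). -/
/-! Multiplying the first identity by `1 - α` turns it into a polynomial identity in `α` that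
is `(α³ + α² - α)` times the cubic relation, and the series is the geometric tail
`α⁶ / (1 - α)`. -/

theorem tsum_pow_add_eq_div_one_sub {K : Type*} [NormedDivisionRing K]
    {ξ : K} (h : ‖ξ‖ < 1) (k : ℕ) :
    ∑' i : ℕ, ξ ^ (i + k) = ξ ^ k / (1 - ξ) := by
  simp_rw [add_comm _ k, pow_add, tsum_mul_left, tsum_geometric_of_norm_lt_one h, div_eq_mul_inv]

theorem mul_one_sub_eq_of_cubic {R : Type*} [CommRing R] {a b α : R}
    (hroot : α ^ 3 = a * α ^ 2 + b * α + 1) :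
    (α + b * α ^ 2 + (a - 1) * α ^ 3) * (1 - α) =
      ((b + 2) * α ^ 4 + (a + b + 1) * α ^ 5) * (1 - α) + (a + b) * α ^ 6 := by
  linear_combination (α ^ 3 + α ^ 2 - α) * hroot

theorem eq_add_div_one_sub_of_cubic {K : Type*} [Field K] {a b α : K}
    (hroot : α ^ 3 = a * α ^ 2 + b * α + 1) (hα : α ≠ 1) :
    α + b * α ^ 2 + (a - 1) * α ^ 3 =
      (b + 2) * α ^ 4 + (a + b + 1) * α ^ 5 + (a + b) * α ^ 6 / (1 - α) := by
  have hne : (1 : K) - α ≠ 0 := sub_ne_zero.mpr hα.symm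
  rw [← sub_eq_iff_eq_add', eq_div_iff hne, sub_mul, mul_one_sub_eq_of_cubic hroot]
  ring

theorem stmt_6_general (a b : ℤ) (α : ℂ)
    (hroot : α ^ 3 = a * α ^ 2 + b * α + 1)
    (h1 : ‖α‖ < 1) :
    α + b * α ^ 2 + (a - 1) * α ^ 3 =
      (b + 2) * α ^ 4 + (a + b + 1) * α ^ 5 + (a + b) * α ^ 6 / (1 - α) ∧
    α + b * α ^ 2 + (a - 1) * α ^ 3 =
      (b + 2) * α ^ 4 + (a + b + 1) * α ^ 5 + (a + b) * ∑' i : ℕ, α ^ (i + 6) := by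
  have hα : α ≠ 1 := by rintro rfl; simp at h1
  have key := eq_add_div_one_sub_of_cubic hroot hα
  refine ⟨key, ?_⟩
  rwa [tsum_pow_add_eq_div_one_sub h1, ← mul_div_assoc]

/-- The identity z₁ = z₂ of two α-representations. -/
theorem stmt_6 (a b : ℤ) (α : ℂ)
    (hroot : α ^ 3 = a * α ^ 2 + b * α + 1)
    (h0 : 0 < ‖α‖) (h1 : ‖α‖ < 1) :
    α + b * α ^ 2 + (a - 1) * α ^ 3 =
      (b + 2) * α ^ 4 + (a + b + 1) * α ^ 5 + (a + b) * α ^ 6 / (1 - α) ∧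
    α + b * α ^ 2 + (a - 1) * α ^ 3 =
      (b + 2) * α ^ 4 + (a + b + 1) * α ^ 5 + (a + b) * ∑' i : ℕ, α ^ (i + 6) :=
  stmt_6_general a b α hroot h1
end

section
/- For every k ≥ l, the real number S̃_k = Σ_{i=l}^{k} (a_i - b_i) β^{i-k+2} satisfies |S̃_k| < β^3, where the digit sequences (a_i) and (b_i) are admissible (lexicographically bounded by (a-1)(a+b-1)(a+b)(a+b)⋯). -/
/-!
Reindexing by `t = k - i` gives `S̃ₖ = β²(Sₐ - S_b)` with `Sₐ = ∑ₜ aₖ₋ₜ β⁻ᵗ` and `S_b`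
likewise. Both are nonnegative, so it suffices that each is `< β`. The word
`p = (a-1)(a+b-1)(a+b)(a+b)⋯` has value `∑ₜ pₜ β⁻ᵗ = β` (this is `d(1,β)`), and all
its partial sums are `< β` because `a + b > 0`. An admissible word agrees with it up to a first
smaller digit at position `t₀`; there it loses at least `β⁻ᵗ⁰`, while the remaining tail is, by
strong induction, worth less than `β⁻ᵗ⁰⁻¹ · β = β⁻ᵗ⁰`.
-/

open Finset

/-- The digits of `d(1,β) = .(a-1)(a+b-1)(a+b)^∞`, indexed from `0`. -/
def parryDigit (a b : ℤ) : ℕ → ℤ :=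
  fun t => if t = 0 then a - 1 else if t = 1 then a + b - 1 else a + b

/-- Every factor `W j, W (j-1), …, W (j-k)` with `j - k ≥ l` is lexicographically at most
`p 0, p 1, …, p k`. -/
def FactorsLexLE (p : ℕ → ℤ) (l : ℤ) (W : ℤ → ℤ) : Prop :=
  ∀ (j : ℤ) (k : ℕ), l ≤ j - k →
    (∀ t : ℕ, t ≤ k → W (j - t) = p t) ∨
    (∃ t : ℕ, t ≤ k ∧ (∀ s : ℕ, s < t → W (j - s) = p s) ∧ W (j - t) < p t)

section ParryDigit

variable {a b : ℤ} {β : ℝ}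

@[simp] theorem parryDigit_zero : parryDigit a b 0 = a - 1 := rfl

@[simp] theorem parryDigit_one : parryDigit a b 1 = a + b - 1 := rfl

@[simp] theorem parryDigit_add_two (t : ℕ) : parryDigit a b (t + 2) = a + b := rfl

theorem sum_parryDigit_range_add_two (hβ : 1 < β) (hβroot : β ^ 3 = a * β ^ 2 + b * β + 1)
    (m : ℕ) :
    ∑ t ∈ range (m + 2), (parryDigit a b t : ℝ) * β⁻¹ ^ t
      = β - (a + b) * β⁻¹ ^ (m + 1) / (β - 1) := by
  have hβ0 : β ≠ 0 := by positivity
  have hβ1 : β - 1 ≠ 0 := sub_ne_zero.mpr hβ.ne'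
  induction m with
  | zero =>
    rw [sum_range_succ, sum_range_one, parryDigit_zero, parryDigit_one]
    push_cast [inv_pow]
    field_simp
    linear_combination -hβroot
  | succ m ih =>
    rw [sum_range_succ, ih, parryDigit_add_two]
    push_cast [inv_pow]
    field_simp
    ring

theorem sum_parryDigit_range_lt (hβ : 1 < β) (hβroot : β ^ 3 = a * β ^ 2 + b * β + 1)
    (hab : 0 < a + b) (m : ℕ) :
    ∑ t ∈ range (m + 1), (parryDigit a b t : ℝ) * β⁻¹ ^ t < β := by
  have hab' : (0 : ℝ) < a + b := by exact_mod_cast hab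
  have hloss (m : ℕ) : 0 < (a + b) * β⁻¹ ^ (m + 1) / (β - 1) := by
    have : 0 < β - 1 := sub_pos.mpr hβ
    positivity
  cases m with
  | zero =>
    have h := sum_parryDigit_range_add_two hβ hβroot 0
    have hdigit : (0 : ℝ) ≤ parryDigit a b 1 := by
      rw [parryDigit_one]
      exact_mod_cast (by omega : (0 : ℤ) ≤ a + b - 1)
    rw [sum_range_succ] at h
    nlinarith [hloss 0, inv_pos.mpr (zero_lt_one.trans hβ)]
  | succ m =>
    rw [sum_parryDigit_range_add_two hβ hβroot m]
    linarith [hloss m]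

end ParryDigit

theorem FactorsLexLE.sum_lt {p : ℕ → ℤ} {l : ℤ} {W : ℤ → ℤ} {β : ℝ} (hW : FactorsLexLE p l W)
    (hβ : 0 < β) (hp : ∀ m, ∑ t ∈ range (m + 1), (p t : ℝ) * β⁻¹ ^ t < β)
    (n : ℕ) (j : ℤ) (hj : l ≤ j - n) :
    ∑ t ∈ range (n + 1), (W (j - t) : ℝ) * β⁻¹ ^ t < β := by
  induction n using Nat.strong_induction_on generalizing j with
  | _ n ih =>
  rcases hW j n hj with hall | ⟨t₀, ht₀, hpre, hlt⟩
  · calc _ = ∑ t ∈ range (n + 1), (p t : ℝ) * β⁻¹ ^ t :=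
          sum_congr rfl fun t ht => by rw [hall t (Nat.lt_succ_iff.mp (mem_range.mp ht))]
      _ < β := hp n
  obtain ⟨m, rfl⟩ := Nat.exists_eq_add_of_le ht₀
  have hhead : ∑ t ∈ range (t₀ + 1), (W (j - t) : ℝ) * β⁻¹ ^ t
      ≤ ∑ t ∈ range (t₀ + 1), (p t : ℝ) * β⁻¹ ^ t - β⁻¹ ^ t₀ := by
    rw [sum_range_succ, sum_range_succ,
      sum_congr rfl fun t ht => by rw [hpre t (mem_range.mp ht)]]
    have : (W (j - t₀) : ℝ) ≤ p t₀ - 1 := by exact_mod_cast Int.le_sub_one_of_lt hlt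
    nlinarith [pow_pos (inv_pos.mpr hβ) t₀]
  have htail : ∑ s ∈ range m, (W (j - ↑(t₀ + 1 + s)) : ℝ) * β⁻¹ ^ (t₀ + 1 + s)
      ≤ β⁻¹ ^ t₀ := by
    cases m with
    | zero => simp only [range_zero, sum_empty]; positivity
    | succ m =>
      have hshift : ∑ s ∈ range (m + 1), (W (j - ↑(t₀ + 1 + s)) : ℝ) * β⁻¹ ^ (t₀ + 1 + s)
          = β⁻¹ ^ (t₀ + 1) * ∑ s ∈ range (m + 1), (W (j - (t₀ + 1) - s) : ℝ) * β⁻¹ ^ s := by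
        rw [mul_sum]
        refine sum_congr rfl fun s _ => ?_
        rw [pow_add, show j - ↑(t₀ + 1 + s) = j - (t₀ + 1) - s by push_cast; ring]
        ring
      have hrest := ih m (by omega) (j - (t₀ + 1)) (by push_cast at hj ⊢; omega)
      calc _ = _ := hshift
        _ ≤ β⁻¹ ^ (t₀ + 1) * β := by gcongr
        _ = β⁻¹ ^ t₀ := by rw [pow_succ, mul_assoc, inv_mul_cancel₀ hβ.ne', mul_one]
  rw [show t₀ + m + 1 = (t₀ + 1) + m by omega, sum_range_add]
  linarith [hp t₀]

theorem sum_Icc_eq_sum_range_sub {M : Type*} [AddCommMonoid M] (f : ℤ → M) {l k : ℤ}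
    (h : l ≤ k) : ∑ i ∈ Icc l k, f i = ∑ t ∈ range ((k - l).toNat + 1), f (k - t) := by
  refine sum_nbij' (fun i => (k - i).toNat) (fun t => k - t) ?_ ?_ ?_ ?_ fun i hi => ?_
  any_goals intro x hx; simp only [mem_Icc, mem_range] at hx ⊢; omega
  rw [mem_Icc] at hi
  congr
  omega

theorem stmt_9_general (a b : ℤ) (hb1 : -a + 1 ≤ b)
    (β : ℝ) (hβ : 1 < β) (hβroot : β ^ 3 = a * β ^ 2 + b * β + 1)
    (l : ℤ) (A B : ℤ → ℤ)
    (hA : ∀ i, 0 ≤ A i ∧ A i ≤ a - 1) (hB : ∀ i, 0 ≤ B i ∧ B i ≤ a - 1)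
    -- admissibility: every finite factor of the digit word (read with most
    -- significant digit first, i.e. decreasing indices) is lexicographically at
    -- most (a-1)(a+b-1)(a+b)(a+b)⋯
    (hAadm : ∀ (j : ℤ) (k : ℕ), l ≤ j - k →
      (let p : ℕ → ℤ := fun t => if t = 0 then a - 1 else if t = 1 then a + b - 1 else a + b
       (∀ t : ℕ, t ≤ k → A (j - t) = p t) ∨
       (∃ t : ℕ, t ≤ k ∧ (∀ s : ℕ, s < t → A (j - s) = p s) ∧ A (j - t) < p t)))
    (hBadm : ∀ (j : ℤ) (k : ℕ), l ≤ j - k →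
      (let p : ℕ → ℤ := fun t => if t = 0 then a - 1 else if t = 1 then a + b - 1 else a + b
       (∀ t : ℕ, t ≤ k → B (j - t) = p t) ∨
       (∃ t : ℕ, t ≤ k ∧ (∀ s : ℕ, s < t → B (j - s) = p s) ∧ B (j - t) < p t))) :
    ∀ k : ℤ, l ≤ k →
      |∑ i ∈ Finset.Icc l k, ((A i : ℝ) - B i) * β ^ (i - k + 2)| < β ^ 3 := by
  intro k hk
  have hβ0 : 0 < β := zero_lt_one.trans hβ
  have hp := sum_parryDigit_range_lt hβ hβroot (by omega : 0 < a + b)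
  set n := (k - l).toNat
  have hkn : l ≤ k - n := by omega
  let S (W : ℤ → ℤ) : ℝ := ∑ t ∈ range (n + 1), (W (k - t) : ℝ) * β⁻¹ ^ t
  have hS_nonneg (W : ℤ → ℤ) (hW : ∀ i, 0 ≤ W i) : 0 ≤ S W :=
    sum_nonneg fun t _ => mul_nonneg (by exact_mod_cast hW _) (by positivity)
  have hSA : S A < β := FactorsLexLE.sum_lt hAadm hβ0 hp n k hkn
  have hSB : S B < β := FactorsLexLE.sum_lt hBadm hβ0 hp n k hkn
  have hsum : ∑ i ∈ Icc l k, ((A i : ℝ) - B i) * β ^ (i - k + 2) = β ^ 2 * (S A - S B) := by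
    rw [sum_Icc_eq_sum_range_sub _ hk, mul_sub, mul_sum, mul_sum, ← sum_sub_distrib]
    refine sum_congr rfl fun t _ => ?_
    rw [show k - t - k + 2 = (2 : ℕ) - (t : ℤ) by ring, zpow_sub₀ hβ0.ne', zpow_natCast,
      zpow_natCast, inv_pow]
    ring
  rw [hsum, abs_mul, abs_of_pos (by positivity), pow_succ]
  exact mul_lt_mul_of_pos_left
    (abs_sub_lt_of_nonneg_of_lt (hS_nonneg A fun i => (hA i).1) hSA
      (hS_nonneg B fun i => (hB i).1) hSB) (by positivity)

/-- For admissible digit sequences, |S̃ₖ| = |∑_{i=l}^{k} (aᵢ-bᵢ) β^{i-k+2}| < β³. -/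
theorem stmt_9 (a b : ℤ) (hb1 : -a + 1 ≤ b) (hb2 : b ≤ -2)
    (β : ℝ) (hβ : 1 < β) (hβroot : β ^ 3 = a * β ^ 2 + b * β + 1)
    (l : ℤ) (A B : ℤ → ℤ)
    (hA : ∀ i, 0 ≤ A i ∧ A i ≤ a - 1) (hB : ∀ i, 0 ≤ B i ∧ B i ≤ a - 1)
    -- admissibility: every finite factor of the digit word (read with most
    -- significant digit first, i.e. decreasing indices) is lexicographically at
    -- most (a-1)(a+b-1)(a+b)(a+b)⋯
    (hAadm : ∀ (j : ℤ) (k : ℕ), l ≤ j - k →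
      (let p : ℕ → ℤ := fun t => if t = 0 then a - 1 else if t = 1 then a + b - 1 else a + b
       (∀ t : ℕ, t ≤ k → A (j - t) = p t) ∨
       (∃ t : ℕ, t ≤ k ∧ (∀ s : ℕ, s < t → A (j - s) = p s) ∧ A (j - t) < p t)))
    (hBadm : ∀ (j : ℤ) (k : ℕ), l ≤ j - k →
      (let p : ℕ → ℤ := fun t => if t = 0 then a - 1 else if t = 1 then a + b - 1 else a + b
       (∀ t : ℕ, t ≤ k → B (j - t) = p t) ∨
       (∃ t : ℕ, t ≤ k ∧ (∀ s : ℕ, s < t → B (j - s) = p s) ∧ B (j - t) < p t))) :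
    ∀ k : ℤ, l ≤ k →
      |∑ i ∈ Finset.Icc l k, ((A i : ℝ) - B i) * β ^ (i - k + 2)| < β ^ 3 :=
  stmt_9_general a b hb1 β hβ hβroot l A B hA hB hAadm hBadm
end

section
/- Let α be the complex root of x^3 - 3x^2 + 2x - 1 with positive imaginary part. Then the point w = α + (α^3 + α^4 + α^5)/(1 - α^6) satisfies: w = 1 - α + 2α^2 + α^3 + Σ_{i=1}^{∞}(α^{6i+1} + α^{6i+2} + α^{6i+3}) and w = α^2 + Σ_{i=1}^{∞}(α^{6i-1} + α^{6i} + α^{6i+1}). -/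
/-! Both series are geometric series in `α⁶` with a three-term numerator, so each equation becomes
an identity of rational functions in `α`; clearing the denominator `1 - α⁶` leaves a polynomial
that is a multiple of `α³ - 3α² + 2α - 1`. -/

theorem tsum_pow_mul_eq_div_one_sub {K : Type*} [NormedField K] {x : K} (hx : ‖x‖ < 1) (c : K) :
    ∑' i : ℕ, x ^ i * c = c / (1 - x) := by
  rw [tsum_mul_right, tsum_geometric_of_norm_lt_one hx, inv_mul_eq_div]

theorem stmt_14_general (α : ℂ) (hroot : α ^ 3 = 3 * α ^ 2 - 2 * α + 1)
    (habs : ‖α‖ < 1) :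
    α + (α ^ 3 + α ^ 4 + α ^ 5) / (1 - α ^ 6) =
      1 - α + 2 * α ^ 2 + α ^ 3 +
        ∑' i : ℕ, (α ^ (6 * (i + 1) + 1) + α ^ (6 * (i + 1) + 2) + α ^ (6 * (i + 1) + 3)) ∧
    α + (α ^ 3 + α ^ 4 + α ^ 5) / (1 - α ^ 6) =
      α ^ 2 + ∑' i : ℕ, (α ^ (6 * (i + 1) - 1) + α ^ (6 * (i + 1)) + α ^ (6 * (i + 1) + 1)) := by
  have h6 : ‖α ^ 6‖ < 1 := by
    rw [norm_pow]
    exact pow_lt_one₀ (norm_nonneg _) habs (by norm_num)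
  have hne : 1 - α ^ 6 ≠ 0 := (isUnit_one_sub_of_norm_lt_one h6).ne_zero
  have hfirst : ∑' i : ℕ, (α ^ (6 * (i + 1) + 1) + α ^ (6 * (i + 1) + 2) + α ^ (6 * (i + 1) + 3))
      = (α ^ 7 + α ^ 8 + α ^ 9) / (1 - α ^ 6) := by
    rw [← tsum_pow_mul_eq_div_one_sub h6]
    exact tsum_congr fun i ↦ by ring
  have hsecond : ∑' i : ℕ, (α ^ (6 * (i + 1) - 1) + α ^ (6 * (i + 1)) + α ^ (6 * (i + 1) + 1))
      = (α ^ 5 + α ^ 6 + α ^ 7) / (1 - α ^ 6) := by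
    rw [← tsum_pow_mul_eq_div_one_sub h6]
    refine tsum_congr fun i ↦ ?_
    rw [show 6 * (i + 1) - 1 = 6 * i + 5 by omega]
    ring
  rw [hfirst, hsecond]
  constructor <;> field_simp
  · linear_combination (1 - α ^ 2 - α ^ 3 + α ^ 5) * hroot
  · linear_combination (-α - α ^ 2 + α ^ 4 + α ^ 5) * hroot

/-- The point w = α + (α³+α⁴+α⁵)/(1-α⁶) has the two series representations. -/
theorem stmt_14 (α : ℂ) (hroot : α ^ 3 = 3 * α ^ 2 - 2 * α + 1)
    (him : 0 < α.im) (habs : ‖α‖ < 1) :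
    α + (α ^ 3 + α ^ 4 + α ^ 5) / (1 - α ^ 6) =
      1 - α + 2 * α ^ 2 + α ^ 3 +
        ∑' i : ℕ, (α ^ (6 * (i + 1) + 1) + α ^ (6 * (i + 1) + 2) + α ^ (6 * (i + 1) + 3)) ∧
    α + (α ^ 3 + α ^ 4 + α ^ 5) / (1 - α ^ 6) =
      α ^ 2 + ∑' i : ℕ, (α ^ (6 * (i + 1) - 1) + α ^ (6 * (i + 1)) + α ^ (6 * (i + 1) + 1)) :=
  stmt_14_general α hroot habs
end

section
/- Let α be the complex root of x^3 - 3x^2 + 2x - 1 with positive imaginary part, and define f_{3+k}(z) = 2α^4 + Σ_{j=1}^{k-1} α^{4+j} + 3α^{5+k} - α^{6+k} + α^{4+k} z for k ≥ 2. Then f_{3+k}(z_0) = f_{3+(k+1)}(y_0), where z_0 = (α^3 + α^4 + α^5)/(1 - α^6) and y_0 = (α^4 + α^5 + α^6)/(1 - α^6). -/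
/-!
The maps are affine with the same recursion in `k`: by the cubic relation
`1 - 3α + 4α² - α³ = α² - α`, so `f_{3+(k+1)} = f_{3+k} ∘ φ` with `φ w = α w + α² - α`.
The claim is therefore just `z₀ = φ y₀`, a polynomial identity in `α` modulo the cubic once the
denominator `1 - α⁶` is cleared; it is nonzero because `|α| < 1`.
-/

theorem one_sub_pow_ne_zero_of_norm_lt_one {𝕜 : Type*} [NormedDivisionRing 𝕜] {x : 𝕜}
    (hx : ‖x‖ < 1) {n : ℕ} (hn : n ≠ 0) : 1 - x ^ n ≠ 0 := by
  intro h
  have hnorm : ‖x ^ n‖ < 1 := by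
    rw [norm_pow]
    exact pow_lt_one₀ (norm_nonneg x) hx hn
  rw [← sub_eq_zero.mp h, norm_one] at hnorm
  exact lt_irrefl 1 hnorm

section RauzyMap

variable {R : Type*} [CommRing R] {α : R}

def rauzyMap (α : R) (k : ℕ) (z : R) : R :=
  2 * α ^ 4 + (∑ j ∈ Finset.Icc 1 (k - 1), α ^ (4 + j)) +
    3 * α ^ (5 + k) - α ^ (6 + k) + α ^ (4 + k) * z

theorem rauzyMap_succ (hroot : α ^ 3 = 3 * α ^ 2 - 2 * α + 1) {k : ℕ} (hk : 1 ≤ k) (w : R) :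
    rauzyMap α (k + 1) w = rauzyMap α k (α * w + α ^ 2 - α) := by
  obtain ⟨m, rfl⟩ : ∃ m, k = m + 1 := ⟨k - 1, by omega⟩
  simp only [rauzyMap, Nat.add_sub_cancel]
  rw [Finset.sum_Icc_succ_top (by omega : 1 ≤ m + 1)]
  linear_combination -α ^ (m + 5) * hroot

end RauzyMap

theorem rauzy_endpoints_eq {K : Type*} [Field K] {α : K}
    (hroot : α ^ 3 = 3 * α ^ 2 - 2 * α + 1) (hden : 1 - α ^ 6 ≠ 0) :
    (α ^ 3 + α ^ 4 + α ^ 5) / (1 - α ^ 6) =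
      α * ((α ^ 4 + α ^ 5 + α ^ 6) / (1 - α ^ 6)) + α ^ 2 - α := by
  field_simp
  linear_combination (-α * (α + 1) * (1 - α ^ 3)) * hroot

theorem stmt_16_general (α : ℂ) (hroot : α ^ 3 = 3 * α ^ 2 - 2 * α + 1)
    (habs : ‖α‖ < 1)
    (f : ℕ → ℂ → ℂ)
    (hf : ∀ k : ℕ, 2 ≤ k → ∀ z : ℂ,
      f (3 + k) z = 2 * α ^ 4 + (∑ j ∈ Finset.Icc 1 (k - 1), α ^ (4 + j)) +
        3 * α ^ (5 + k) - α ^ (6 + k) + α ^ (4 + k) * z) :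
    ∀ k : ℕ, 2 ≤ k →
      f (3 + k) ((α ^ 3 + α ^ 4 + α ^ 5) / (1 - α ^ 6)) =
      f (3 + (k + 1)) ((α ^ 4 + α ^ 5 + α ^ 6) / (1 - α ^ 6)) := by
  intro k hk
  have hf_eq : ∀ n, 2 ≤ n → f (3 + n) = rauzyMap α n := fun n hn => funext (hf n hn)
  rw [hf_eq k hk, hf_eq (k + 1) (by omega), rauzyMap_succ hroot (by omega),
    rauzy_endpoints_eq hroot (one_sub_pow_ne_zero_of_norm_lt_one habs (by norm_num))]

/-- f_{3+k}(z₀) = f_{3+(k+1)}(y₀) for the IFS maps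
f_{3+k}(z) = 2α⁴ + ∑_{j=1}^{k-1} α^{4+j} + 3α^{5+k} - α^{6+k} + α^{4+k} z, k ≥ 2. -/
theorem stmt_16 (α : ℂ) (hroot : α ^ 3 = 3 * α ^ 2 - 2 * α + 1)
    (him : 0 < α.im) (habs : ‖α‖ < 1)
    (f : ℕ → ℂ → ℂ)
    (hf : ∀ k : ℕ, 2 ≤ k → ∀ z : ℂ,
      f (3 + k) z = 2 * α ^ 4 + (∑ j ∈ Finset.Icc 1 (k - 1), α ^ (4 + j)) +
        3 * α ^ (5 + k) - α ^ (6 + k) + α ^ (4 + k) * z) :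
    ∀ k : ℕ, 2 ≤ k →
      f (3 + k) ((α ^ 3 + α ^ 4 + α ^ 5) / (1 - α ^ 6)) =
      f (3 + (k + 1)) ((α ^ 4 + α ^ 5 + α ^ 6) / (1 - α ^ 6)) :=
  stmt_16_general α hroot habs f hf
end

section
/- If β is the Pisot root of x^3 - a x^2 - b x - 1 with a = 3, b = -2, then β/(β-1) is also a Pisot number (β is a 'special Pisot number'). -/
/-!
The substitution β = γ/(γ - 1) turns β³ - 3β² + 2β - 1 = 0 into (β - 1)³ = β, i.e.
γ (γ - 1)² = 1 for γ = β/(β - 1). So γ is a root of X (X - 1)² - 1, and dividing out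
X - γ leaves the real quadratic z² + (γ - 2) z + (γ - 1)², whose discriminant is
-γ (3γ - 4) < 0. Its roots are therefore complex conjugate, of squared modulus
(γ - 1)² = 1/γ < 1.
-/

open Polynomial

lemma Complex.sq_norm_eq_of_sq_add_mul_add_eq_zero {b c : ℝ} (hdisc : b ^ 2 < 4 * c) {z : ℂ}
    (hz : z ^ 2 + b * z + c = 0) : ‖z‖ ^ 2 = c := by
  have hre : z.re ^ 2 - z.im ^ 2 + b * z.re + c = 0 := by
    simpa [pow_two] using congrArg Complex.re hz
  have him : z.im * (2 * z.re + b) = 0 := by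
    have := congrArg Complex.im hz
    simp only [pow_two, Complex.add_im, Complex.mul_im, Complex.ofReal_re, Complex.ofReal_im,
      Complex.zero_im] at this
    linarith
  rw [Complex.sq_norm, Complex.normSq_apply]
  rcases mul_eq_zero.mp him with hy | hx
  · nlinarith [sq_nonneg (2 * z.re + b)]
  · linear_combination -hre + z.re * hx

lemma div_sub_one_mul_sub_one_sq {β : ℝ} (hβ : β ≠ 1)
    (hroot : β ^ 3 = 3 * β ^ 2 - 2 * β + 1) :
    β / (β - 1) * (β / (β - 1) - 1) ^ 2 = 1 := by
  have hβ' : β - 1 ≠ 0 := sub_ne_zero.mpr hβ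
  field_simp
  linear_combination -hroot

lemma norm_lt_one_of_mul_sub_one_sq_eq_one {γ : ℝ} (hγ : γ * (γ - 1) ^ 2 = 1) {z : ℂ}
    (hz : z * (z - 1) ^ 2 = 1) (hne : z ≠ γ) : ‖z‖ < 1 := by
  have hγ1 : 1 < γ := by nlinarith [sq_nonneg (γ - 1), sq_nonneg γ]
  have hquad : z ^ 2 + ((γ - 2 : ℝ) : ℂ) * z + ((γ - 1) ^ 2 : ℝ) = 0 := by
    have hγℂ : (γ : ℂ) * (γ - 1) ^ 2 = 1 := by exact_mod_cast hγ
    have hfac : (z - γ) * (z ^ 2 + ((γ - 2 : ℝ) : ℂ) * z + ((γ - 1) ^ 2 : ℝ)) = 0 := by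
      push_cast
      linear_combination hz - hγℂ
    exact (mul_eq_zero.mp hfac).resolve_left (sub_ne_zero.mpr hne)
  have hnorm := Complex.sq_norm_eq_of_sq_add_mul_add_eq_zero (by nlinarith) hquad
  have hγsq : (γ - 1) ^ 2 < 1 := by nlinarith
  exact (sq_lt_one_iff₀ (norm_nonneg z)).mp (hnorm ▸ hγsq)

/-- If β is the Pisot root of x³ - 3x² + 2x - 1, then β/(β-1) is also a Pisot
number: it is greater than 1, it is a root of a monic integer polynomial of
positive degree all of whose other complex roots have modulus < 1. -/
theorem stmt_18 (β : ℝ) (hβ : 1 < β) (hroot : β ^ 3 = 3 * β ^ 2 - 2 * β + 1) :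
    1 < β / (β - 1) ∧
    ∃ p : Polynomial ℤ, p.Monic ∧ 0 < p.degree ∧
      Polynomial.aeval (β / (β - 1)) p = 0 ∧
      ∀ z : ℂ, Polynomial.aeval z p = 0 → z ≠ ((β / (β - 1) : ℝ) : ℂ) →
        ‖z‖ < 1 := by
  have hγ := div_sub_one_mul_sub_one_sq hβ.ne' hroot
  have hdeg : (X * (X - 1) ^ 2 - 1 : ℤ[X]).natDegree = 3 := by compute_degree!
  refine ⟨(one_lt_div (sub_pos.mpr hβ)).mpr (sub_one_lt β), X * (X - 1) ^ 2 - 1,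
    by monicity!, natDegree_pos_iff_degree_pos.mp (by omega), by simpa [sub_eq_zero] using hγ, fun z hz hne => ?_⟩
  exact norm_lt_one_of_mul_sub_one_sq_eq_one hγ (by simpa [sub_eq_zero] using hz) hne
end
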